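/- Let S be a finite set of n axis-aligned squares whose side lengths all lie in [d, ψ·d] for some d > 0 and ψ ≥ 1. Then |𝒞(S)| ≤ n·(log₂ψ + 3). -/

import Mathlib

open Set

/-- A dyadic cell at level `level` (side length `2^level`) with lower-left corner
`(a·2^level, b·2^level)`. -/
structure DyadicCell where
  level : ℤ
  a : ℤ
  b : ℤ
deriving DecidableEq

/-- The side length of a dyadic cell. -/
noncomputable def DyadicCell.side (C : DyadicCell) : ℝ := 2 ^ C.level

/-- The dyadic cell as a subset of the plane. -/
noncomputable def DyadicCell.toSet (C : DyadicCell) : Set (ℝ × ℝ) :=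
  Set.Icc ((C.a : ℝ) * 2 ^ C.level) ((C.a + 1 : ℝ) * 2 ^ C.level) ×ˢ
    Set.Icc ((C.b : ℝ) * 2 ^ C.level) ((C.b + 1 : ℝ) * 2 ^ C.level)

/-- `5C`: the square obtained by scaling the cell `C` by a factor `5` about its center. -/
noncomputable def DyadicCell.scale5 (C : DyadicCell) : Set (ℝ × ℝ) :=
  Set.Icc ((C.a - 2 : ℝ) * 2 ^ C.level) ((C.a + 3 : ℝ) * 2 ^ C.level) ×ˢ
    Set.Icc ((C.b - 2 : ℝ) * 2 ^ C.level) ((C.b + 3 : ℝ) * 2 ^ C.level)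

/-- An axis-aligned square `[x, x+s] × [y, y+s]` of side length `s > 0`. -/
structure Square where
  x : ℝ
  y : ℝ
  s : ℝ
  s_pos : 0 < s

/-- The square as a subset of the plane. -/
noncomputable def Square.toSet (σ : Square) : Set (ℝ × ℝ) :=
  Set.Icc σ.x (σ.x + σ.s) ×ˢ Set.Icc σ.y (σ.y + σ.s)

/-- The center of a square. -/
noncomputable def Square.center (σ : Square) : ℝ × ℝ := (σ.x + σ.s / 2, σ.y + σ.s / 2)

/-- `C` is a storing cell of `σ`: a dyadic cell of maximal side length among those that
contain the center of `σ` and are contained in `σ`. -/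
def IsStoringCell (σ : Square) (C : DyadicCell) : Prop :=
  σ.center ∈ C.toSet ∧ C.toSet ⊆ σ.toSet ∧
    ∀ D : DyadicCell, σ.center ∈ D.toSet → D.toSet ⊆ σ.toSet → D.side ≤ C.side

/-- `C` is a storing cell of the set `S` (with fixed storing-cell choice `c`):
some square of `S` is stored in `C`. -/
def IsStoringCellOf (S : Finset Square) (c : Square → DyadicCell) (C : DyadicCell) : Prop :=
  ∃ σ ∈ S, c σ = C

/-- `π(C)`: the squares of `S` stored in `C`. -/
def piCell (S : Finset Square) (c : Square → DyadicCell) (C : DyadicCell) : Set Square :=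
  {σ | σ ∈ S ∧ c σ = C}

/-- `𝒞(σ)`: the dyadic cells `D ⊆ σ` containing at least one storing cell of `S`,
maximal with both properties. -/
def calC (S : Finset Square) (c : Square → DyadicCell) (σ : Square) : Set DyadicCell :=
  {D | D.toSet ⊆ σ.toSet ∧ (∃ E, IsStoringCellOf S c E ∧ E.toSet ⊆ D.toSet) ∧
    ¬ ∃ D' : DyadicCell, D.toSet ⊂ D'.toSet ∧ D'.toSet ⊆ σ.toSet ∧
      ∃ E, IsStoringCellOf S c E ∧ E.toSet ⊆ D'.toSet}

/-- `𝒫(γ)`: the storing cells `D` of `S` with `side(D) ≤ side(γ)` such that `5D`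
intersects the boundary of `γ`. -/
def calP (S : Finset Square) (c : Square → DyadicCell) (γ : Square) : Set DyadicCell :=
  {D | IsStoringCellOf S c D ∧ D.side ≤ γ.s ∧ (D.scale5 ∩ frontier γ.toSet).Nonempty}


lemma two_zpow_pos (l : ℤ) : (0:ℝ) < 2 ^ l := zpow_pos two_pos l

lemma cell_subset_cell {C D : DyadicCell} (h : C.toSet ⊆ D.toSet) :
    ((D.a:ℝ)) * 2 ^ D.level ≤ (C.a:ℝ) * 2 ^ C.level ∧
    ((C.a:ℝ) + 1) * 2 ^ C.level ≤ ((D.a:ℝ) + 1) * 2 ^ D.level ∧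
    ((D.b:ℝ)) * 2 ^ D.level ≤ (C.b:ℝ) * 2 ^ C.level ∧
    ((C.b:ℝ) + 1) * 2 ^ C.level ≤ ((D.b:ℝ) + 1) * 2 ^ D.level := by
  have hp := two_zpow_pos C.level
  have h1 : ((C.a:ℝ) * 2 ^ C.level, (C.b:ℝ) * 2 ^ C.level) ∈ C.toSet := by
    simp only [DyadicCell.toSet, Set.mem_prod, Set.mem_Icc]
    refine ⟨⟨le_refl _, ?_⟩, ⟨le_refl _, ?_⟩⟩ <;> nlinarith
  have h2 : (((C.a:ℝ)+1) * 2 ^ C.level, ((C.b:ℝ)+1) * 2 ^ C.level) ∈ C.toSet := by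
    simp only [DyadicCell.toSet, Set.mem_prod, Set.mem_Icc]
    refine ⟨⟨?_, le_refl _⟩, ⟨?_, le_refl _⟩⟩ <;> nlinarith
  have m1 := h h1
  have m2 := h h2
  simp only [DyadicCell.toSet, Set.mem_prod, Set.mem_Icc] at m1 m2
  exact ⟨m1.1.1, m2.1.2, m1.2.1, m2.2.2⟩

lemma side_le_of_subset {C D : DyadicCell} (h : C.toSet ⊆ D.toSet) :
    (2:ℝ) ^ C.level ≤ 2 ^ D.level := by
  obtain ⟨a1, a2, -, -⟩ := cell_subset_cell h
  nlinarith

lemma level_le_of_subset {C D : DyadicCell} (h : C.toSet ⊆ D.toSet) :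
    C.level ≤ D.level := by
  have := side_le_of_subset h
  exact le_of_not_gt fun hlt => absurd this (not_le.2 (zpow_lt_zpow_right₀ one_lt_two hlt))

lemma cell_eq_of_level_eq {E D D' : DyadicCell} (h : E.toSet ⊆ D.toSet)
    (h' : E.toSet ⊆ D'.toSet) (hl : D.level = D'.level) : D = D' := by
  obtain ⟨a1, a2, b1, b2⟩ := cell_subset_cell h
  obtain ⟨a1', a2', b1', b2'⟩ := cell_subset_cell h'
  have hpE := two_zpow_pos E.level
  have hpD := two_zpow_pos D.level
  have hEl : (2:ℝ) ^ E.level ≤ 2 ^ D.level := side_le_of_subset h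
  rw [← hl] at a1' a2' b1' b2'
  have ha : D.a = D'.a := by
    have h1 : (D.a:ℝ) < (D'.a:ℝ) + 1 := by nlinarith
    have h2 : (D'.a:ℝ) < (D.a:ℝ) + 1 := by nlinarith
    have := Int.lt_add_one_iff.1 (by exact_mod_cast h1)
    have := Int.lt_add_one_iff.1 (by exact_mod_cast h2)
    omega
  have hb : D.b = D'.b := by
    have h1 : (D.b:ℝ) < (D'.b:ℝ) + 1 := by nlinarith
    have h2 : (D'.b:ℝ) < (D.b:ℝ) + 1 := by nlinarith
    have := Int.lt_add_one_iff.1 (by exact_mod_cast h1)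
    have := Int.lt_add_one_iff.1 (by exact_mod_cast h2)
    omega
  cases D; cases D'; simp_all

lemma side_le_of_subset_square {C : DyadicCell} {σ : Square} (h : C.toSet ⊆ σ.toSet) :
    (2:ℝ) ^ C.level ≤ σ.s := by
  have hp := two_zpow_pos C.level
  have h1 : ((C.a:ℝ) * 2 ^ C.level, (C.b:ℝ) * 2 ^ C.level) ∈ C.toSet := by
    simp only [DyadicCell.toSet, Set.mem_prod, Set.mem_Icc]
    refine ⟨⟨le_refl _, ?_⟩, ⟨le_refl _, ?_⟩⟩ <;> nlinarith
  have h2 : (((C.a:ℝ)+1) * 2 ^ C.level, ((C.b:ℝ)+1) * 2 ^ C.level) ∈ C.toSet := by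
    simp only [DyadicCell.toSet, Set.mem_prod, Set.mem_Icc]
    refine ⟨⟨?_, le_refl _⟩, ⟨?_, le_refl _⟩⟩ <;> nlinarith
  have m1 := h h1
  have m2 := h h2
  simp only [Square.toSet, Set.mem_prod, Set.mem_Icc] at m1 m2
  nlinarith [m1.1.1, m2.1.2]

lemma storing_side_lt {σ : Square} {C : DyadicCell} (h : IsStoringCell σ C) :
    σ.s / 4 < C.side := by
  have hs := σ.s_pos
  set l := Int.log 2 (σ.s / 2) with hl
  have h1 : (2:ℝ) ^ l ≤ σ.s / 2 := by
    have := Int.zpow_log_le_self (b := 2) (r := σ.s / 2) (by norm_num) (by linarith)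
    exact_mod_cast this
  have h2 : σ.s / 2 < 2 ^ (l + 1) := by
    have := Int.lt_zpow_succ_log_self (b := 2) (by norm_num) (σ.s / 2)
    exact_mod_cast this
  have hp := two_zpow_pos l
  set cx := σ.x + σ.s / 2 with hcx
  set cy := σ.y + σ.s / 2 with hcy
  have fx1 : (⌊cx / 2 ^ l⌋ : ℝ) * 2 ^ l ≤ cx := by
    have := Int.floor_le (cx / 2 ^ l)
    calc (⌊cx / 2 ^ l⌋ : ℝ) * 2 ^ l ≤ cx / 2 ^ l * 2 ^ l := by nlinarith
      _ = cx := div_mul_cancel₀ cx hp.ne'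
  have fx2 : cx ≤ ((⌊cx / 2 ^ l⌋ : ℝ) + 1) * 2 ^ l := by
    have h3 := Int.lt_floor_add_one (cx / 2 ^ l)
    have : cx / 2 ^ l * 2 ^ l ≤ ((⌊cx / 2 ^ l⌋ : ℝ) + 1) * 2 ^ l := by nlinarith
    rwa [div_mul_cancel₀ cx hp.ne'] at this
  have fx3 : cx - 2 ^ l < (⌊cx / 2 ^ l⌋ : ℝ) * 2 ^ l := by
    have h3 := Int.lt_floor_add_one (cx / 2 ^ l)
    have : cx / 2 ^ l * 2 ^ l < ((⌊cx / 2 ^ l⌋ : ℝ) + 1) * 2 ^ l := by nlinarith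
    rw [div_mul_cancel₀ cx hp.ne'] at this
    nlinarith
  have fy1 : (⌊cy / 2 ^ l⌋ : ℝ) * 2 ^ l ≤ cy := by
    have := Int.floor_le (cy / 2 ^ l)
    calc (⌊cy / 2 ^ l⌋ : ℝ) * 2 ^ l ≤ cy / 2 ^ l * 2 ^ l := by nlinarith
      _ = cy := div_mul_cancel₀ cy hp.ne'
  have fy2 : cy ≤ ((⌊cy / 2 ^ l⌋ : ℝ) + 1) * 2 ^ l := by
    have h3 := Int.lt_floor_add_one (cy / 2 ^ l)
    have : cy / 2 ^ l * 2 ^ l ≤ ((⌊cy / 2 ^ l⌋ : ℝ) + 1) * 2 ^ l := by nlinarith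
    rwa [div_mul_cancel₀ cy hp.ne'] at this
  have fy3 : cy - 2 ^ l < (⌊cy / 2 ^ l⌋ : ℝ) * 2 ^ l := by
    have h3 := Int.lt_floor_add_one (cy / 2 ^ l)
    have : cy / 2 ^ l * 2 ^ l < ((⌊cy / 2 ^ l⌋ : ℝ) + 1) * 2 ^ l := by nlinarith
    rw [div_mul_cancel₀ cy hp.ne'] at this
    nlinarith
  set D : DyadicCell := ⟨l, ⌊cx / 2 ^ l⌋, ⌊cy / 2 ^ l⌋⟩ with hD
  have hcenter : σ.center ∈ D.toSet := by
    simp only [DyadicCell.toSet, Square.center, Set.mem_prod, Set.mem_Icc, hD]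
    exact ⟨⟨fx1, fx2⟩, ⟨fy1, fy2⟩⟩
  have hsub : D.toSet ⊆ σ.toSet := by
    rintro ⟨u, v⟩ huv
    simp only [DyadicCell.toSet, Set.mem_prod, Set.mem_Icc, hD] at huv
    obtain ⟨hu, hv⟩ := huv
    simp only [Square.toSet, Set.mem_prod, Set.mem_Icc]
    constructor
    · constructor
      · have : σ.x ≤ (⌊cx / 2 ^ l⌋ : ℝ) * 2 ^ l := by
          have : cx - 2 ^ l ≥ σ.x := by rw [hcx]; linarith
          linarith [fx3]
        linarith [hu.1]
      · have : ((⌊cx / 2 ^ l⌋ : ℝ) + 1) * 2 ^ l ≤ σ.x + σ.s := by nlinarith [fx1]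
        linarith [hu.2]
    · constructor
      · have : σ.y ≤ (⌊cy / 2 ^ l⌋ : ℝ) * 2 ^ l := by
          have : cy - 2 ^ l ≥ σ.y := by rw [hcy]; linarith
          linarith [fy3]
        linarith [hv.1]
      · have : ((⌊cy / 2 ^ l⌋ : ℝ) + 1) * 2 ^ l ≤ σ.y + σ.s := by nlinarith [fy1]
        linarith [hv.2]
  have hmax := h.2.2 D hcenter hsub
  have : D.side = 2 ^ l := rfl
  rw [this] at hmax
  have : (2:ℝ) ^ (l+1) = 2 * 2 ^ l := by
    rw [zpow_add_one₀ (by norm_num : (2:ℝ) ≠ 0)]; ring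
  rw [this] at h2
  linarith

-- Choice of a square of `S` whose storing cell is contained in `D`, if one exists.
open Classical in
noncomputable def chooseSq (S : Finset Square) (c : Square → DyadicCell) (D : DyadicCell) :
    Square :=
  if h : ∃ τ, τ ∈ S ∧ (c τ).toSet ⊆ D.toSet then h.choose else ⟨0, 0, 1, one_pos⟩

lemma chooseSq_spec {S : Finset Square} {c : Square → DyadicCell} {D : DyadicCell}
    (h : ∃ τ, τ ∈ S ∧ (c τ).toSet ⊆ D.toSet) :
    chooseSq S c D ∈ S ∧ (c (chooseSq S c D)).toSet ⊆ D.toSet := by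
  simp only [chooseSq, dif_pos h]
  exact h.choose_spec

theorem statement10 (S : Finset Square) (n : ℕ) (hn : S.card = n)
    (c : Square → DyadicCell) (hc : ∀ σ ∈ S, IsStoringCell σ (c σ))
    (d ψ : ℝ) (hd : 0 < d) (hψ : 1 ≤ ψ)
    (hside : ∀ σ ∈ S, d ≤ σ.s ∧ σ.s ≤ ψ * d) :
    letI CS : Set DyadicCell := ⋃ σ ∈ S, calC S c σ
    CS.Finite ∧ (CS.ncard : ℝ) ≤ n * (Real.logb 2 ψ + 3) := by
  classical
  show (⋃ σ ∈ S, calC S c σ).Finite ∧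
    (((⋃ σ ∈ S, calC S c σ).ncard : ℝ) ≤ n * (Real.logb 2 ψ + 3))
  set U : Set DyadicCell := ⋃ σ ∈ S, calC S c σ with hU
  set K : ℕ := ⌊Real.logb 2 ψ⌋₊ + 3 with hK
  have hψ0 : (0:ℝ) < ψ := lt_of_lt_of_le one_pos hψ
  have hlogb : 0 ≤ Real.logb 2 ψ := Real.logb_nonneg one_lt_two hψ
  set f : DyadicCell → Square × ℕ :=
    fun D => (chooseSq S c D, (D.level - (c (chooseSq S c D)).level).toNat) with hf
  have hUP : ∀ D ∈ U, (∃ τ, τ ∈ S ∧ (c τ).toSet ⊆ D.toSet) ∧ (2:ℝ) ^ D.level ≤ ψ * d := by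
    intro D hD
    rw [hU] at hD
    simp only [Set.mem_iUnion] at hD
    obtain ⟨σ, hσ, hDσ⟩ := hD
    obtain ⟨hsub, ⟨E, ⟨τ, hτS, hτE⟩, hED⟩, -⟩ := hDσ
    refine ⟨⟨τ, hτS, by rw [hτE]; exact hED⟩, ?_⟩
    have h1 := side_le_of_subset_square hsub
    have h2 := (hside σ hσ).2
    linarith
  -- injectivity
  have hinj : Set.InjOn f U := by
    intro D hD D' hD' hfe
    have hPD := (hUP D hD).1
    have hPD' := (hUP D' hD').1
    obtain ⟨hgS, hgsub⟩ := chooseSq_spec hPD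
    obtain ⟨hgS', hgsub'⟩ := chooseSq_spec hPD'
    have h1 : chooseSq S c D = chooseSq S c D' := congrArg Prod.fst hfe
    have h2 : (D.level - (c (chooseSq S c D)).level).toNat
        = (D'.level - (c (chooseSq S c D')).level).toNat := congrArg Prod.snd hfe
    have n1 : (c (chooseSq S c D)).level ≤ D.level := level_le_of_subset hgsub
    have n2 : (c (chooseSq S c D)).level ≤ D'.level := by
      rw [h1]; exact level_le_of_subset hgsub'
    rw [← h1] at h2
    have hlev_eq : D.level = D'.level := by omega
    exact cell_eq_of_level_eq hgsub (by rw [h1]; exact hgsub') hlev_eq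
  -- maps into S ×ˢ range K
  have hmaps : ∀ D ∈ U, f D ∈ (S ×ˢ Finset.range K : Finset (Square × ℕ)) := by
    intro D hD
    obtain ⟨hPD, hDψ⟩ := hUP D hD
    obtain ⟨hgS, hgsub⟩ := chooseSq_spec hPD
    set τ := chooseSq S c D with hτ
    set E := c τ with hE
    have hEτ : τ.s / 4 < E.side := storing_side_lt (hc τ hgS)
    have hτd : d ≤ τ.s := (hside τ hgS).1
    have hEside : E.side = 2 ^ E.level := rfl
    have hE4 : d / 4 < (2:ℝ) ^ E.level := by rw [hEside] at hEτ; linarith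
    have hnn : 0 ≤ D.level - E.level := by
      have := level_le_of_subset hgsub; omega
    have hk : (2:ℝ) ^ (D.level - E.level) < 4 * ψ := by
      rw [zpow_sub₀ (two_ne_zero), div_lt_iff₀ (two_zpow_pos _)]
      nlinarith [two_zpow_pos E.level]
    set k : ℕ := (D.level - E.level).toNat with hk2
    have hkk : (2:ℝ) ^ k < 4 * ψ := by
      rw [← zpow_natCast (2:ℝ) k, hk2, Int.toNat_of_nonneg hnn]; exact hk
    have h5 : Real.logb 2 ((2:ℝ) ^ k) = k := by
      rw [Real.logb_pow, Real.logb_self_eq_one one_lt_two, mul_one]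
    have h6 : Real.logb 2 (4:ℝ) = 2 := by
      have h4 : (4:ℝ) = 2 ^ (2:ℕ) := by norm_num
      rw [h4, Real.logb_pow, Real.logb_self_eq_one one_lt_two]
      norm_num
    have hklt : (k:ℝ) < Real.logb 2 ψ + 2 := by
      have h4 : Real.logb 2 ((2:ℝ) ^ k) < Real.logb 2 (4 * ψ) :=
        Real.logb_lt_logb one_lt_two (by positivity) hkk
      rw [Real.logb_mul (by norm_num) (ne_of_gt hψ0), h5, h6] at h4
      linarith
    have hkK : k < K := by
      have hle : (k:ℝ) ≤ Real.logb 2 ψ + (2:ℕ) := by push_cast; linarith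
      have := Nat.le_floor hle
      rw [Nat.floor_add_natCast hlogb 2] at this
      omega
    simp only [hf, Finset.mem_product, Finset.mem_range]
    exact ⟨hgS, hkK⟩
  have himg : f '' U ⊆ ↑(S ×ˢ Finset.range K) := by
    rintro _ ⟨D, hD, rfl⟩; exact hmaps D hD
  have hfin : U.Finite :=
    Set.Finite.of_finite_image ((Finset.finite_toSet _).subset himg) hinj
  refine ⟨hfin, ?_⟩
  have h1 : U.ncard ≤ (S ×ˢ Finset.range K).card := by
    rw [← Set.ncard_coe_finset, ← Set.ncard_image_of_injOn hinj]
    exact Set.ncard_le_ncard himg (Finset.finite_toSet _)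
  rw [Finset.card_product, Finset.card_range, hn] at h1
  have h2 : (U.ncard : ℝ) ≤ (n : ℝ) * K := by exact_mod_cast h1
  have h3 : (K : ℝ) ≤ Real.logb 2 ψ + 3 := by
    have := Nat.floor_le hlogb
    rw [hK]; push_cast; linarith
  calc (U.ncard : ℝ) ≤ (n : ℝ) * K := h2
    _ ≤ n * (Real.logb 2 ψ + 3) := by
        apply mul_le_mul_of_nonneg_left h3 (Nat.cast_nonneg n)
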